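/- Let g : ℝ → ℝ be continuously differentiable and increasing, and let a < b be real numbers. Then there exists g̃ ∈ C¹(ℝ) such that (i) g̃(s) = g(s) for all s ∈ [a,b]; (ii) g̃ is strictly increasing on (-∞, a] and on [b, +∞); and (iii) there exist positive constants c₁, c₂ with g̃(s)/s → c₁ as s → +∞ and g̃(s)/s → c₂ as s → -∞. -/

import Mathlib

open Filter Topology Set

/-!
Let `π t = max a (min b t)` be the projection onto `[a, b]` and take the slope
`ψ t = max (g' (π t)) (min 1 (max (a - t) (t - b)))`. It is continuous, equals `g' ≥ 0` on
`[a, b]` (where the second term is `≤ 0`), is positive off `[a, b]`, and is the constant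
`max (g' b) 1` on `[b + 1, ∞)` and `max (g' a) 1` on `(-∞, a - 1]`. Hence
`g̃ s = g a + ∫ t in a..s, ψ t` is `C¹`, agrees with `g` on `[a, b]` by the fundamental theorem
of calculus, is strictly increasing off `[a, b]`, and is affine with slope `≥ 1` near `±∞`.
-/

section Asymptotics

variable {G : ℝ → ℝ} {c T : ℝ}

theorem tendsto_div_self_of_eventually_eq_mul_add {l : Filter ℝ}
    (hl : Tendsto (fun s : ℝ => s⁻¹) l (𝓝 0)) (hl₀ : ∀ᶠ s in l, s ≠ 0) {d : ℝ}
    (hG : ∀ᶠ s in l, G s = c * s + d) : Tendsto (fun s => G s / s) l (𝓝 c) := by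
  have h : Tendsto (fun s => c + d * s⁻¹) l (𝓝 c) := by
    simpa using tendsto_const_nhds.add (hl.const_mul d)
  refine h.congr' ?_
  filter_upwards [hG, hl₀] with s hGs hs
  rw [hGs]
  field_simp

theorem eq_add_mul_sub_of_hasDerivAt_const {s : ℝ} (hG : ∀ t ∈ uIcc T s, HasDerivAt G c t) :
    G s = G T + c * (s - T) := by
  have := intervalIntegral.integral_eq_sub_of_hasDerivAt hG intervalIntegrable_const
  rw [intervalIntegral.integral_const, smul_eq_mul] at this
  linarith

theorem tendsto_div_self_atTop_of_hasDerivAt_const (hG : ∀ t ≥ T, HasDerivAt G c t) :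
    Tendsto (fun s => G s / s) atTop (𝓝 c) := by
  refine tendsto_div_self_of_eventually_eq_mul_add tendsto_inv_atTop_zero (eventually_ne_atTop 0)
    (d := G T - c * T) ?_
  filter_upwards [eventually_ge_atTop T] with s hs
  rw [eq_add_mul_sub_of_hasDerivAt_const fun t ht => hG t (uIcc_of_le hs ▸ ht).1]
  ring

theorem tendsto_div_self_atBot_of_hasDerivAt_const (hG : ∀ t ≤ T, HasDerivAt G c t) :
    Tendsto (fun s => G s / s) atBot (𝓝 c) := by
  refine tendsto_div_self_of_eventually_eq_mul_add tendsto_inv_atBot_zero (eventually_ne_atBot 0)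
    (d := G T - c * T) ?_
  filter_upwards [eventually_le_atBot T] with s hs
  rw [eq_add_mul_sub_of_hasDerivAt_const fun t ht => hG t (uIcc_of_ge hs ▸ ht).2]
  ring

end Asymptotics

section ExtensionSlope

variable {φ : ℝ → ℝ} {a b t : ℝ}

def extensionSlope (φ : ℝ → ℝ) (a b t : ℝ) : ℝ :=
  max (φ (max a (min b t))) (min 1 (max (a - t) (t - b)))

theorem continuous_extensionSlope (hφ : Continuous φ) : Continuous (extensionSlope φ a b) := by
  unfold extensionSlope
  fun_prop

theorem extensionSlope_of_mem (hφ : ∀ t ∈ Icc a b, 0 ≤ φ t) (ht : t ∈ Icc a b) :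
    extensionSlope φ a b t = φ t := by
  have hproj : max a (min b t) = t := by rw [min_eq_right ht.2, max_eq_right ht.1]
  have hbump : min 1 (max (a - t) (t - b)) ≤ 0 :=
    (min_le_right _ _).trans (max_le (by linarith [ht.1]) (by linarith [ht.2]))
  rw [extensionSlope, hproj, max_eq_left (hbump.trans (hφ t ht))]

theorem extensionSlope_pos (ht : t ∉ Icc a b) : 0 < extensionSlope φ a b t := by
  have hout : 0 < max (a - t) (t - b) := by
    rcases not_and_or.mp ht with h | h
    · exact lt_max_of_lt_left (by linarith [not_le.mp h])
    · exact lt_max_of_lt_right (by linarith [not_le.mp h])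
  exact lt_max_of_lt_right (lt_min one_pos hout)

theorem extensionSlope_of_add_one_le (hab : a ≤ b) (ht : b + 1 ≤ t) :
    extensionSlope φ a b t = max (φ b) 1 := by
  rw [extensionSlope, min_eq_left (by linarith), max_eq_right hab,
    min_eq_left (le_max_of_le_right (by linarith))]

theorem extensionSlope_of_le_sub_one (hab : a ≤ b) (ht : t ≤ a - 1) :
    extensionSlope φ a b t = max (φ a) 1 := by
  rw [extensionSlope, min_eq_right (by linarith), max_eq_left (show t ≤ a by linarith),
    min_eq_left (le_max_of_le_left (by linarith))]

end ExtensionSlope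

section Extension

variable {g : ℝ → ℝ} {a b : ℝ}

noncomputable def monotoneExtension (g : ℝ → ℝ) (a b s : ℝ) : ℝ :=
  g a + ∫ t in a..s, extensionSlope (deriv g) a b t

theorem hasDerivAt_monotoneExtension (hg : Continuous (deriv g)) (s : ℝ) :
    HasDerivAt (monotoneExtension g a b) (extensionSlope (deriv g) a b s) s :=
  ((continuous_extensionSlope hg).integral_hasStrictDerivAt a s).hasDerivAt.const_add (g a)

theorem contDiff_monotoneExtension (hg : Continuous (deriv g)) :
    ContDiff ℝ 1 (monotoneExtension g a b) := by
  have hderiv : deriv (monotoneExtension g a b) = extensionSlope (deriv g) a b :=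
    funext fun s => (hasDerivAt_monotoneExtension hg s).deriv
  exact contDiff_one_iff_deriv.mpr ⟨fun s => (hasDerivAt_monotoneExtension hg s).differentiableAt,
    hderiv ▸ continuous_extensionSlope hg⟩

theorem monotoneExtension_of_mem (hg : ContDiff ℝ 1 g) (hmono : Monotone g) {s : ℝ}
    (hs : s ∈ Icc a b) : monotoneExtension g a b s = g s := by
  have hslope : ∀ t ∈ uIcc a s, HasDerivAt g (extensionSlope (deriv g) a b t) t := by
    intro t ht
    rw [uIcc_of_le hs.1] at ht
    rw [extensionSlope_of_mem (fun _ _ => hmono.deriv_nonneg) ⟨ht.1, ht.2.trans hs.2⟩]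
    exact (hg.differentiable one_ne_zero t).hasDerivAt
  rw [monotoneExtension, intervalIntegral.integral_eq_sub_of_hasDerivAt hslope
    ((continuous_extensionSlope (hg.continuous_deriv le_rfl)).intervalIntegrable a s)]
  ring

theorem strictMonoOn_monotoneExtension (hg : Continuous (deriv g)) {D : Set ℝ} (hD : Convex ℝ D)
    (hDab : interior D ⊆ (Icc a b)ᶜ) : StrictMonoOn (monotoneExtension g a b) D := by
  refine strictMonoOn_of_deriv_pos hD (contDiff_monotoneExtension hg).continuous.continuousOn ?_
  intro s hs
  rw [(hasDerivAt_monotoneExtension hg s).deriv]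
  exact extensionSlope_pos (hDab hs)

end Extension

/-- Lemma 2.1 of Wang–Zuo.
Let `g : ℝ → ℝ` be `C¹` and increasing, and let `a < b`.  Then there is `g̃ ∈ C¹(ℝ)`
agreeing with `g` on `[a,b]`, strictly increasing on `(-∞,a]` and on `[b,+∞)`, and with
`g̃ s / s → c₁ > 0` as `s → +∞` and `g̃ s / s → c₂ > 0` as `s → -∞`. -/
theorem extension_of_increasing_function
    (g : ℝ → ℝ) (hg : ContDiff ℝ 1 g) (hmono : Monotone g)
    (a b : ℝ) (hab : a < b) :
    ∃ gt : ℝ → ℝ, ContDiff ℝ 1 gt ∧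
      (∀ s ∈ Icc a b, gt s = g s) ∧
      StrictMonoOn gt (Iic a) ∧
      StrictMonoOn gt (Ici b) ∧
      ∃ c₁ c₂ : ℝ, 0 < c₁ ∧ 0 < c₂ ∧
        Tendsto (fun s => gt s / s) atTop (𝓝 c₁) ∧
        Tendsto (fun s => gt s / s) atBot (𝓝 c₂) := by
  have hg' : Continuous (deriv g) := hg.continuous_deriv le_rfl
  refine ⟨monotoneExtension g a b, contDiff_monotoneExtension hg',
    fun s hs => monotoneExtension_of_mem hg hmono hs,
    strictMonoOn_monotoneExtension hg' (convex_Iic a) ?_,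
    strictMonoOn_monotoneExtension hg' (convex_Ici b) ?_,
    max (deriv g b) 1, max (deriv g a) 1, by positivity, by positivity,
    tendsto_div_self_atTop_of_hasDerivAt_const (T := b + 1) fun t ht => ?_,
    tendsto_div_self_atBot_of_hasDerivAt_const (T := a - 1) fun t ht => ?_⟩
  · rw [interior_Iic]
    exact fun s hs hmem => (not_le.mpr hs) hmem.1
  · rw [interior_Ici]
    exact fun s hs hmem => (not_le.mpr hs) hmem.2
  · rw [← extensionSlope_of_add_one_le hab.le ht]
    exact hasDerivAt_monotoneExtension hg' t
  · rw [← extensionSlope_of_le_sub_one hab.le ht]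
    exact hasDerivAt_monotoneExtension hg' t
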